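/- arXiv:1611.02551 — 8 statements merged into one kernel-verified Lean document; each statement's English description precedes it below -/
import Mathlib

section
/- Let π : G → A be a partial representation of a group G in a unital associative K-algebra A, and for g ∈ G set e_g := π(g)π(g⁻¹). Then the commutation relation π(g) · e_h = e_{gh} · π(g) holds for all g, h ∈ G. -/
/-- A partial representation of a group `G` in a unital associative algebra `A`. -/
def IsPartialRep {G A : Type*} [Group G] [Ring A] (π : G → A) : Prop :=
  (∀ s t : G, π s * π t * π (t⁻¹) = π (s * t) * π (t⁻¹)) ∧
  (∀ s t : G, π (s⁻¹) * π s * π t = π (s⁻¹) * π (s * t)) ∧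
  π 1 = 1

/-- For a partial representation `π` of `G` in a unital `K`-algebra `A`, with
`e_g := π g * π g⁻¹`, the commutation relation `π g * e_h = e_{gh} * π g` holds. -/
theorem partialRep_commutation {K G A : Type*} [Field K] [Group G] [Ring A] [Algebra K A]
    (π : G → A) (hπ : IsPartialRep π) (g h : G) :
    π g * (π h * π (h⁻¹)) = (π (g * h) * π ((g * h)⁻¹)) * π g := by
  obtain ⟨ha, hb, -⟩ := hπ
  have h1 : π g * π h * π h⁻¹ = π (g * h) * π h⁻¹ := ha g h
  have h2 : π ((g*h)⁻¹⁻¹) * π (g*h)⁻¹ * π g = π ((g*h)⁻¹⁻¹) * π ((g*h)⁻¹ * g) := hb (g*h)⁻¹ g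
  simp only [inv_inv, mul_inv_rev, inv_mul_cancel_right] at h2 ⊢
  rw [mul_assoc] at h2
  rw [← mul_assoc, h1, mul_assoc, h2]
end

section
/- Let π : G → A be a partial representation of a group G in a unital associative K-algebra A, and for g ∈ G set e_g := π(g)π(g⁻¹). Then the idempotents e_g commute among themselves: e_g · e_h = e_h · e_g for all g, h ∈ G. -/
/-- For a partial representation `π` of `G` in a unital `K`-algebra `A`, the
idempotents `e_g := π g * π g⁻¹` commute among themselves. -/
theorem partialRep_e_comm {K G A : Type*} [Field K] [Group G] [Ring A] [Algebra K A]
    (π : G → A) (hπ : IsPartialRep π) (g h : G) :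
    (π g * π (g⁻¹)) * (π h * π (h⁻¹)) = (π h * π (h⁻¹)) * (π g * π (g⁻¹)) := by
  obtain ⟨ha, hb, he⟩ := hπ
  -- π x * π x⁻¹ * π x = π x
  have hx : ∀ x : G, π x * π x⁻¹ * π x = π x := by
    intro x
    have := ha x x⁻¹
    simpa [he] using this
  -- π a * π (a⁻¹ * b) = π a * π a⁻¹ * π b
  have hk : ∀ a b : G, π a * π (a⁻¹ * b) = π a * π a⁻¹ * π b := by
    intro a b
    have h1 := hb a (a⁻¹ * b)
    simp only [mul_inv_cancel_left] at h1
    calc π a * π (a⁻¹ * b) = π a * π a⁻¹ * π a * π (a⁻¹ * b) := by rw [hx]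
      _ = π a * (π a⁻¹ * π a * π (a⁻¹ * b)) := by noncomm_ring
      _ = π a * (π a⁻¹ * π b) := by rw [h1]
      _ = π a * π a⁻¹ * π b := by noncomm_ring
  calc (π g * π (g⁻¹)) * (π h * π (h⁻¹))
      = π g * (π g⁻¹ * π h * π h⁻¹) := by noncomm_ring
    _ = π g * (π (g⁻¹ * h) * π h⁻¹) := by rw [ha g⁻¹ h]
    _ = π g * (π (g⁻¹ * h) * π ((g⁻¹ * h)⁻¹) * π (g⁻¹ * h) * π h⁻¹) := by rw [hx]
    _ = (π g * π (g⁻¹ * h) * π ((g⁻¹ * h)⁻¹)) * (π (g⁻¹ * h) * π h⁻¹) := by noncomm_ring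
    _ = (π (g * (g⁻¹ * h)) * π ((g⁻¹ * h)⁻¹)) * (π (g⁻¹ * h) * π h⁻¹) := by
        rw [ha g (g⁻¹ * h)]
    _ = π h * (π ((g⁻¹ * h)⁻¹) * π (g⁻¹ * h) * π h⁻¹) := by
        rw [mul_inv_cancel_left]; noncomm_ring
    _ = π h * (π ((g⁻¹ * h)⁻¹) * π ((g⁻¹ * h) * h⁻¹)) := by rw [hb (g⁻¹ * h) h⁻¹]
    _ = π h * π (h⁻¹ * g) * π g⁻¹ := by
        simp only [mul_inv_rev, inv_inv, mul_inv_cancel_right]; noncomm_ring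
    _ = π h * π h⁻¹ * π g * π g⁻¹ := by rw [hk h g]
    _ = (π h * π (h⁻¹)) * (π g * π (g⁻¹)) := by noncomm_ring
end

section
/- Let π : G → A be a partial representation of a group G in a unital associative K-algebra A, and for g ∈ G set e_g := π(g)π(g⁻¹). For any m ≥ 1 and any g₁, …, g_m ∈ G, define h₁ = g₁ and h_i = g_{i−1}⁻¹ g_i for i = 2, …, m. Then e_{g₁} e_{g₂} ⋯ e_{g_m} = π(h₁) π(h₂) ⋯ π(h_m) · π(h_m⁻¹) ⋯ π(h₂⁻¹) π(h₁⁻¹). -/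
theorem SemiconjBy.list_prod_map {ι M : Type*} [Monoid M] {a : M} {f g : ι → M}
    (h : ∀ i, SemiconjBy a (f i) (g i)) (l : List ι) :
    SemiconjBy a (l.map f).prod (l.map g).prod := by
  induction l with
  | nil => exact SemiconjBy.one_right a
  | cons i l ih => exact (h i).mul_right ih

theorem Fin.eq_partialProd_succ_of_inv_mul {G : Type*} [Group G] {m : ℕ} {g h : Fin m → G}
    (hh0 : ∀ (h0 : 0 < m), h ⟨0, h0⟩ = g ⟨0, h0⟩)
    (hhi : ∀ i : Fin m, 0 < (i : ℕ) →
      h i = (g ⟨(i : ℕ) - 1, (Nat.sub_le _ _).trans_lt i.isLt⟩)⁻¹ * g i)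
    (i : Fin m) : g i = Fin.partialProd h i.succ := by
  obtain ⟨k, hk⟩ := i
  induction k with
  | zero =>
    rw [Fin.partialProd_succ]
    simp [hh0 hk]
  | succ k ih =>
    have hprev : Fin.partialProd h (Fin.castSucc ⟨k + 1, hk⟩) = g ⟨k, by omega⟩ :=
      (ih (by omega)).symm
    rw [Fin.partialProd_succ, hhi ⟨k + 1, hk⟩ (Nat.succ_pos k), hprev]
    exact (mul_inv_cancel_left _ _).symm

namespace IsPartialRep

variable {G A : Type*} [Group G] [Ring A] {π : G → A}

def e (π : G → A) (g : G) : A := π g * π g⁻¹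

theorem semiconjBy_e (hπ : IsPartialRep π) (t s : G) :
    SemiconjBy (π t) (e π s) (e π (t * s)) := by
  obtain ⟨hright, hleft, -⟩ := hπ
  have hleft' := hleft (t * s)⁻¹ t
  rw [inv_inv, show (t * s)⁻¹ * t = s⁻¹ by group] at hleft'
  calc π t * (π s * π s⁻¹)
      = π (t * s) * π s⁻¹ := by rw [← mul_assoc, hright]
    _ = π (t * s) * π (t * s)⁻¹ * π t := hleft'.symm

theorem commute_e (hπ : IsPartialRep π) (s t : G) : Commute (e π s) (e π t) := by
  have h₁ : e π s * π t = π t * e π (t⁻¹ * s) := by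
    simpa using (hπ.semiconjBy_e t (t⁻¹ * s)).symm
  have h₂ : π t⁻¹ * e π s = e π (t⁻¹ * s) * π t⁻¹ := hπ.semiconjBy_e t⁻¹ s
  calc e π s * (π t * π t⁻¹)
      = π t * (e π (t⁻¹ * s) * π t⁻¹) := by rw [← mul_assoc, h₁, mul_assoc]
    _ = π t * π t⁻¹ * e π s := by rw [← h₂, mul_assoc]

theorem prod_e_partialProd (hπ : IsPartialRep π) {n : ℕ} (h : Fin n → G) :
    (List.ofFn fun i => e π (Fin.partialProd h i.succ)).prod =
      (List.ofFn fun i => π (h i)).prod * ((List.ofFn fun i => π (h i)⁻¹).reverse).prod := by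
  induction n with
  | zero => simp
  | succ n ih =>
    have hshift := SemiconjBy.list_prod_map (hπ.semiconjBy_e (h 0))
      (List.ofFn fun i => Fin.partialProd (Fin.tail h) i.succ)
    simp only [List.map_ofFn, Function.comp_def] at hshift
    simp only [List.ofFn_succ, List.prod_cons, List.reverse_cons, List.prod_append,
      List.prod_nil, Fin.partialProd_succ', Fin.partialProd_zero, mul_one]
    calc e π (h 0) * (List.ofFn fun i => e π (h 0 * Fin.partialProd (Fin.tail h) i.succ)).prod
        = (List.ofFn fun i => e π (h 0 * Fin.partialProd (Fin.tail h) i.succ)).prod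
            * e π (h 0) :=
          (Commute.list_prod_right _ _ fun x hx => by
            obtain ⟨i, rfl⟩ := List.mem_ofFn.mp hx
            exact hπ.commute_e _ _).eq
      _ = π (h 0) * (List.ofFn fun i => e π (Fin.partialProd (Fin.tail h) i.succ)).prod
            * π (h 0)⁻¹ := by rw [e, ← mul_assoc, ← hshift.eq]
      _ = _ := by rw [ih (Fin.tail h)]; simp only [Fin.tail, mul_assoc]

end IsPartialRep

theorem partialRep_e_prod {G A : Type*} [Group G] [Ring A]
    (π : G → A) (hπ : IsPartialRep π) (m : ℕ)
    (g h : Fin m → G)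
    (hh0 : ∀ (h0 : 0 < m), h ⟨0, h0⟩ = g ⟨0, h0⟩)
    (hhi : ∀ i : Fin m, ∀ (hi : 0 < (i : ℕ)),
      h i = (g ⟨(i : ℕ) - 1, by omega⟩)⁻¹ * g i) :
    (List.ofFn fun i => π (g i) * π ((g i)⁻¹)).prod =
      (List.ofFn fun i => π (h i)).prod *
        ((List.ofFn fun i => π ((h i)⁻¹)).reverse).prod := by
  obtain rfl : g = fun i => Fin.partialProd h i.succ :=
    funext (Fin.eq_partialProd_succ_of_inv_mul hh0 hhi)
  exact hπ.prod_e_partialProd h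
end

section
/- Let π : G → A be a partial representation of a group G in a unital associative K-algebra A. Then the map ρ : G → End_K(A) defined by ρ(g)(x) = π(g) · x · π(g⁻¹) for x ∈ A is a partial representation of G on the K-vector space A; that is, ρ(e) = id_A, ρ(s)ρ(t)ρ(t⁻¹) = ρ(st)ρ(t⁻¹) and ρ(s⁻¹)ρ(s)ρ(t) = ρ(s⁻¹)ρ(st) as K-linear endomorphisms of A, for all s, t ∈ G. -/
/-- If `π : G → A` is a partial representation of `G` in a unital `K`-algebra `A`, then
the map `ρ : G → End_K(A)` given by `ρ g x = π g * x * π g⁻¹` is (well defined as a map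
into `K`-linear endomorphisms and is) a partial representation of `G` on the
`K`-vector space `A`. -/
theorem partialRep_conjugation {K G A : Type*} [Field K] [Group G] [Ring A] [Algebra K A]
    (π : G → A) (hπ : IsPartialRep π) :
    ∃ ρ : G → Module.End K A,
      (∀ (g : G) (x : A), ρ g x = π g * x * π (g⁻¹)) ∧ IsPartialRep ρ := by
  obtain ⟨h1, h2, h3⟩ := hπ
  refine ⟨fun g => (LinearMap.mulRight K (π g⁻¹)).comp (LinearMap.mulLeft K (π g)),
    fun g x => rfl, ?_, ?_, ?_⟩
  · intro s t
    ext x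
    simp only [Module.End.mul_apply, LinearMap.comp_apply, LinearMap.mulRight_apply,
      LinearMap.mulLeft_apply, inv_inv, mul_inv_rev]
    have h2' : ∀ b : A, b * π t * π t⁻¹ * π s⁻¹ = b * π t * π (t⁻¹ * s⁻¹) := by
      intro b
      have := h2 t⁻¹ s⁻¹
      rw [inv_inv] at this
      rw [mul_assoc b (π t), mul_assoc b, this, ← mul_assoc]
    calc π s * (π t * (π t⁻¹ * x * π t) * π t⁻¹) * π s⁻¹
        = π s * π t * π t⁻¹ * x * π t * π t⁻¹ * π s⁻¹ := by simp only [mul_assoc]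
      _ = π (s * t) * π t⁻¹ * x * π t * π t⁻¹ * π s⁻¹ := by rw [h1]
      _ = π (s * t) * π t⁻¹ * x * π t * π (t⁻¹ * s⁻¹) := h2' _
      _ = π (s * t) * (π t⁻¹ * x * π t) * π (t⁻¹ * s⁻¹) := by simp only [mul_assoc]
  · intro s t
    ext x
    simp only [Module.End.mul_apply, LinearMap.comp_apply, LinearMap.mulRight_apply,
      LinearMap.mulLeft_apply, inv_inv, mul_inv_rev]
    have h1' : ∀ b : A, b * π t⁻¹ * π s⁻¹ * π s = b * π (t⁻¹ * s⁻¹) * π s := by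
      intro b
      have := h1 t⁻¹ s⁻¹
      rw [inv_inv] at this
      rw [mul_assoc b (π t⁻¹), mul_assoc b, this, ← mul_assoc]
    calc π s⁻¹ * (π s * (π t * x * π t⁻¹) * π s⁻¹) * π s
        = π s⁻¹ * π s * π t * x * π t⁻¹ * π s⁻¹ * π s := by simp only [mul_assoc]
      _ = π s⁻¹ * π (s * t) * x * π t⁻¹ * π s⁻¹ * π s := by rw [h2]
      _ = π s⁻¹ * π (s * t) * x * π (t⁻¹ * s⁻¹) * π s := h1' _
      _ = π s⁻¹ * (π (s * t) * x * π (t⁻¹ * s⁻¹)) * π s := by simp only [mul_assoc]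
  · ext x
    simp [h3]
end

section
/- Let π₁ : G → B and π₂ : G → C be partial representations of a group G in unital associative K-algebras B and C. Then the map π : G → B ⊗_K Cᵒᵖ defined by π(g) = π₁(g) ⊗ π₂(g⁻¹) (where π₂(g⁻¹) is regarded as an element of the opposite algebra Cᵒᵖ) is a partial representation of G in the tensor product algebra B ⊗_K Cᵒᵖ. -/
open scoped TensorProduct

/-- If `π₁ : G → B` and `π₂ : G → C` are partial representations of `G` in unital
`K`-algebras `B` and `C`, then `g ↦ π₁ g ⊗ π₂ (g⁻¹)` (the second factor regarded in the
opposite algebra `Cᵒᵖ`) is a partial representation of `G` in `B ⊗_K Cᵒᵖ`. -/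
theorem partialRep_tensor_op {K G B C : Type*} [Field K] [Group G]
    [Ring B] [Algebra K B] [Ring C] [Algebra K C]
    (π₁ : G → B) (π₂ : G → C) (h₁ : IsPartialRep π₁) (h₂ : IsPartialRep π₂) :
    IsPartialRep (fun g => π₁ g ⊗ₜ[K] MulOpposite.op (π₂ (g⁻¹)) : G → B ⊗[K] Cᵐᵒᵖ) := by
  obtain ⟨a₁, b₁, e₁⟩ := h₁
  obtain ⟨a₂, b₂, e₂⟩ := h₂
  refine ⟨fun s t => ?_, fun s t => ?_, ?_⟩
  · simp only [Algebra.TensorProduct.tmul_mul_tmul, ← MulOpposite.op_mul]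
    rw [a₁ s t, mul_inv_rev]
    congr 2
    simpa [mul_assoc] using b₂ t⁻¹ s⁻¹
  · simp only [Algebra.TensorProduct.tmul_mul_tmul, ← MulOpposite.op_mul]
    rw [b₁ s t, mul_inv_rev]
    congr 2
    simpa [mul_assoc] using a₂ t⁻¹ s⁻¹
  · simp [e₁, e₂, Algebra.TensorProduct.one_def]
end

section
/- Let θ : G → Aut_K(E) be an action of a group G on a unital K-algebra E by K-algebra automorphisms, and let A be a two-sided ideal of E possessing a multiplicative identity 1_A (i.e. 1_A ∈ A and 1_A·a = a = a·1_A for all a ∈ A). For g ∈ G set D_g := A ∩ θ_g(A) and let α_g be the restriction of θ_g to D_{g⁻¹}. Then: each D_g is a two-sided ideal of the ring A possessing the multiplicative identity u_g := 1_A · θ_g(1_A); θ_g maps D_{g⁻¹} bijectively onto D_g; and the data ({D_g}, {α_g}) satisfy the axioms of a partial action of G on A, namely D_e = A and α_e = id_A, α_h(D_{h⁻¹} ∩ D_{(gh)⁻¹}) = D_h ∩ D_{g⁻¹} for all g, h ∈ G, and α_g(α_h(x)) = α_{gh}(x) for all x ∈ D_{h⁻¹} ∩ D_{(gh)⁻¹}.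 -/
/-- Let `θ` be an action of a group `G` on a unital `K`-algebra `E` by `K`-algebra
automorphisms, and let `A ⊆ E` be a two-sided ideal possessing a multiplicative
identity `oneA`.  Setting `D g := A ∩ θ g '' A`, `u g := oneA * θ g oneA`, and letting
`α g` be the restriction of `θ g` to `D g⁻¹`, we get:  each `D g` is a two-sided ideal
of the ring `A` with multiplicative identity `u g`; `θ g` maps `D g⁻¹` bijectively onto
`D g`; and the data `({D g}, {α g})` satisfy the axioms of a partial action of `G`
on `A`. -/
theorem restriction_partialAction {K E G : Type*} [Field K] [Ring E] [Algebra K E] [Group G]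
    (θ : G →* (E ≃ₐ[K] E))
    (A : Set E)
    (hzero : (0 : E) ∈ A)
    (hadd : ∀ a ∈ A, ∀ b ∈ A, a + b ∈ A)
    (hneg : ∀ a ∈ A, -a ∈ A)
    (hleft : ∀ x : E, ∀ a ∈ A, x * a ∈ A)
    (hright : ∀ x : E, ∀ a ∈ A, a * x ∈ A)
    (oneA : E) (h1mem : oneA ∈ A)
    (h1id : ∀ a ∈ A, oneA * a = a ∧ a * oneA = a)
    (D : G → Set E) (hD : ∀ g, D g = A ∩ (θ g '' A))
    (u : G → E) (hu : ∀ g, u g = oneA * θ g oneA) :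
    -- each `D g` is a two-sided ideal of the ring `A`
    (∀ g, D g ⊆ A) ∧
    (∀ g, (0 : E) ∈ D g) ∧
    (∀ g, ∀ x ∈ D g, ∀ y ∈ D g, x + y ∈ D g) ∧
    (∀ g, ∀ x ∈ D g, -x ∈ D g) ∧
    (∀ g, ∀ a ∈ A, ∀ x ∈ D g, a * x ∈ D g ∧ x * a ∈ D g) ∧
    -- with multiplicative identity `u g`
    (∀ g, u g ∈ D g) ∧
    (∀ g, ∀ x ∈ D g, u g * x = x ∧ x * u g = x) ∧
    -- `θ g` maps `D g⁻¹` bijectively onto `D g`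
    (∀ g, Set.BijOn (θ g) (D (g⁻¹)) (D g)) ∧
    -- axioms of a partial action
    (D (1 : G) = A) ∧
    (∀ x ∈ D (1 : G), θ (1 : G) x = x) ∧
    (∀ g h : G, θ h '' (D (h⁻¹) ∩ D ((g * h)⁻¹)) = D h ∩ D (g⁻¹)) ∧
    (∀ g h : G, ∀ x ∈ D (h⁻¹) ∩ D ((g * h)⁻¹), θ g (θ h x) = θ (g * h) x) := by

  have key : ∀ (g h : G) (x : E), θ g (θ h x) = θ (g * h) x := by
    intro g h x
    rw [map_mul]
    rfl
  have one_apply : ∀ x : E, θ (1 : G) x = x := by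
    intro x
    rw [map_one]
    rfl
  have cancel : ∀ (g : G) (x : E), θ g (θ g⁻¹ x) = x := by
    intro g x
    rw [key, mul_inv_cancel, one_apply]
  have cancel' : ∀ (g : G) (x : E), θ g⁻¹ (θ g x) = x := by
    intro g x
    rw [key, inv_mul_cancel, one_apply]
  have inj : ∀ g : G, Function.Injective (θ g) := fun g => (θ g).injective
  -- image of A under θ g is a two-sided ideal of E
  have imem : ∀ (g : G) (x : E), x ∈ A → θ g x ∈ θ g '' A := fun g x hx => ⟨x, hx, rfl⟩
  have ileft : ∀ (g : G) (x : E), ∀ m ∈ θ g '' A, x * m ∈ θ g '' A := by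
    rintro g x m ⟨a, ha, rfl⟩
    exact ⟨θ g⁻¹ x * a, hleft _ _ ha, by rw [map_mul, cancel]⟩
  have iright : ∀ (g : G) (x : E), ∀ m ∈ θ g '' A, m * x ∈ θ g '' A := by
    rintro g x m ⟨a, ha, rfl⟩
    exact ⟨a * θ g⁻¹ x, hright _ _ ha, by rw [map_mul, cancel]⟩
  have DsubA : ∀ g, D g ⊆ A := by
    intro g; rw [hD]; exact Set.inter_subset_left
  refine ⟨DsubA, ?_, ?_, ?_, ?_, ?_, ?_, ?_, ?_, ?_, ?_, ?_⟩
  · intro g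
    rw [hD]
    exact ⟨hzero, 0, hzero, map_zero _⟩
  · intro g x hx y hy
    rw [hD] at *
    obtain ⟨hxA, a, ha, rfl⟩ := hx
    obtain ⟨hyA, b, hb, rfl⟩ := hy
    exact ⟨hadd _ hxA _ hyA, a + b, hadd _ ha _ hb, map_add _ _ _⟩
  · intro g x hx
    rw [hD] at *
    obtain ⟨hxA, a, ha, rfl⟩ := hx
    exact ⟨hneg _ hxA, -a, hneg _ ha, map_neg _ _⟩
  · intro g a ha x hx
    rw [hD] at *
    obtain ⟨hxA, hxI⟩ := hx
    exact ⟨⟨hleft _ _ hxA, ileft _ _ _ hxI⟩, ⟨hright _ _ hxA, iright _ _ _ hxI⟩⟩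
  · intro g
    rw [hD, hu]
    exact ⟨hright _ _ h1mem, ileft _ _ _ (imem _ _ h1mem)⟩
  · intro g x hx
    rw [hD] at hx
    obtain ⟨hxA, a, ha, rfl⟩ := hx
    rw [hu]
    constructor
    · rw [mul_assoc, ← map_mul, (h1id a ha).1, (h1id _ hxA).1]
    · rw [← mul_assoc, (h1id _ hxA).2, ← map_mul, (h1id a ha).2]
  · intro g
    refine ⟨?_, fun x _ y _ hxy => inj g hxy, ?_⟩
    · intro x hx
      rw [hD] at *
      obtain ⟨hxA, a, ha, hax⟩ := hx
      refine ⟨?_, imem _ _ hxA⟩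
      have : θ g x = a := by rw [← hax, cancel]
      rw [this]; exact ha
    · intro y hy
      rw [hD] at hy
      obtain ⟨hyA, a, ha, rfl⟩ := hy
      refine ⟨a, ?_, rfl⟩
      rw [hD]
      exact ⟨ha, θ g a, hyA, cancel' g a⟩
  · rw [hD]
    ext x
    simp only [Set.mem_inter_iff, Set.mem_image]
    constructor
    · exact fun h => h.1
    · intro h; exact ⟨h, x, h, one_apply x⟩
  · intro x _; exact one_apply x
  · intro g h
    rw [hD, hD, hD, hD]
    have him : ∀ (a b : G) (s : Set E), θ a '' (θ b '' s) = θ (a * b) '' s := by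
      intro a b s
      rw [Set.image_image]
      exact Set.image_congr fun x _ => key a b x
    rw [Set.image_inter (inj h), Set.image_inter (inj h), Set.image_inter (inj h),
        him, him, mul_inv_cancel, mul_inv_rev, ← mul_assoc, mul_inv_cancel, one_mul]
    have hid : θ (1 : G) '' A = A := by
      ext x
      simp only [Set.mem_image]
      exact ⟨fun ⟨a, ha, hax⟩ => by rw [one_apply] at hax; exact hax ▸ ha,
        fun hx => ⟨x, hx, one_apply x⟩⟩
    rw [hid]
    ext x
    simp only [Set.mem_inter_iff]
    tauto
  · intro g h x _
    exact key g h x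
end

section
/- Let S be a commutative semigroup in which every element is an idempotent (s·s = s for all s ∈ S), let K be a field, and let KS be the semigroup algebra of S over K. Then every finitely generated (two-sided) ideal I of KS is principal; moreover, I is generated by an idempotent element u ∈ I which acts as a two-sided multiplicative identity on I (u·y = y = y·u for all y ∈ I). -/
/-!
An idempotent commutative semigroup `S` is a meet-semilattice for `m ≤ s ↔ m * s = m`, and the
indicator of each principal filter `{s | m ≤ s}` extends to a character `χₘ : KS → K`. These
characters separate points: at a maximal element `m` of the support of `f`, `χₘ f` is the
coefficient of `f` at `m`. For generators `f ∈ s` the values `χₘ f` form a finite set, so the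
"Boolean join" `u = 1 - ∏ (1 - f² / t²)` over generators `f` and values `t`, expanded so that no
unit is needed, lies in the ideal and has `χₘ u = 1` if some `χₘ f ≠ 0` and `χₘ u = 0`
otherwise. Separation then gives `u² = u` and `u f = f` for all generators.
-/

open Finset

namespace TwoSidedIdeal

variable {R : Type*} [NonUnitalCommRing R]

lemma mul_eq_self_of_mem_span {u : R} {s : Set R} (hs : ∀ a ∈ s, u * a = a) {y : R}
    (hy : y ∈ span s) : u * y = y := by
  induction hy using span_induction with
  | mem a ha => exact hs a ha
  | zero => exact mul_zero u
  | add a b _ _ ha hb => rw [mul_add, ha, hb]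
  | neg a _ ha => rw [mul_neg, ha]
  | left_absorb b a _ ha => rw [mul_left_comm, ha]
  | right_absorb b a _ ha => rw [← mul_assoc, ha]

lemma span_eq_span_singleton_of_mul_eq {u : R} {s : Set R} (hus : u ∈ span s)
    (hs : ∀ a ∈ s, u * a = a) : span s = span {u} := by
  refine le_antisymm (span_le.mpr fun a ha => ?_) (span_le.mpr <| by simpa using hus)
  rw [← hs a ha]
  exact mul_mem_right _ _ _ (subset_span rfl)

lemma exists_mem_forall_map_eq_one_sub_prod {K H : Type*} [CommRing K] [FunLike H R K]
    [NonUnitalRingHomClass H R K] (I : TwoSidedIdeal R) (F : Finset R) (hF : ∀ a ∈ F, a ∈ I) :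
    ∃ u ∈ I, ∀ χ : H, χ u = 1 - ∏ a ∈ F, (1 - χ a) := by
  classical
  induction F using Finset.induction_on with
  | empty => exact ⟨0, zero_mem I, by simp⟩
  | insert a F haF ih =>
    obtain ⟨u, huI, hu⟩ := ih fun b hb => hF b (mem_insert_of_mem hb)
    have haI := hF a (mem_insert_self a F)
    refine ⟨a + u - a * u, sub_mem I (add_mem I haI huI) (mul_mem_right I a u haI),
      fun χ => ?_⟩
    rw [prod_insert haF, map_sub, map_add, map_mul, hu]
    ring

end TwoSidedIdeal

namespace MonoidAlgebra

variable {K S : Type*} [Field K] [CommSemigroup S]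

lemma mul_eq_left_iff_of_idem (hS : ∀ s : S, s * s = s) {m s t : S} :
    m * (s * t) = m ↔ m * s = m ∧ m * t = m := by
  refine ⟨fun h => ⟨?_, ?_⟩, fun ⟨hs, ht⟩ => by rw [← mul_assoc, hs, ht]⟩
  · rw [← h, mul_assoc, mul_right_comm s, hS]
  · rw [← h, mul_assoc, mul_assoc, hS]

open scoped Classical in
noncomputable def filterChar (hS : ∀ s : S, s * s = s) (m : S) :
    MonoidAlgebra K S →ₙₐ[K] K :=
  liftMagma K
    { toFun := fun s => if m * s = m then 1 else 0
      map_mul' := fun s t => by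
        simp only [mul_eq_left_iff_of_idem hS, ite_zero_mul_ite_zero, one_mul] }

open scoped Classical in
lemma filterChar_apply (hS : ∀ s : S, s * s = s) (m : S) (f : MonoidAlgebra K S) :
    filterChar hS m f = ∑ s ∈ f.coeff.support with m * s = m, f.coeff s := by
  rw [filterChar, liftMagma_apply_apply, sum_filter]
  simp [Finsupp.liftAddHom_apply, Finsupp.sum]

lemma eq_zero_of_forall_filterChar_eq_zero (hS : ∀ s : S, s * s = s) {f : MonoidAlgebra K S}
    (hf : ∀ m, filterChar hS m f = 0) : f = 0 := by
  let : SemilatticeInf S := @SemilatticeInf.mk' S ⟨(· * ·)⟩ mul_comm mul_assoc hS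
  by_contra hf0
  obtain ⟨m, hm, hmax⟩ :=
    f.coeff.support.exists_maximal (Finsupp.support_nonempty_iff.mpr (by simpa using hf0))
  have hfm : filterChar hS m f = f.coeff m := by
    classical
    have hmm : m ∈ {s ∈ f.coeff.support | m * s = m} := mem_filter.mpr ⟨hm, hS m⟩
    rw [filterChar_apply, sum_eq_single_of_mem m hmm]
    intro s hs hsm
    have hms : m ≤ s := (mul_comm s m).trans (mem_filter.mp hs).2
    exact absurd (le_antisymm (hmax (mem_filter.mp hs).1 hms) hms) hsm
  exact Finsupp.mem_support_iff.mp hm (hfm ▸ hf m)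

lemma eq_of_forall_filterChar_eq (hS : ∀ s : S, s * s = s) {f g : MonoidAlgebra K S}
    (h : ∀ m, filterChar hS m f = filterChar hS m g) : f = g :=
  sub_eq_zero.mp <| eq_zero_of_forall_filterChar_eq_zero hS fun m => by rw [map_sub, h, sub_self]

open scoped Classical in
lemma finite_range_filterChar (hS : ∀ s : S, s * s = s) (f : MonoidAlgebra K S) :
    (Set.range fun m => filterChar hS m f).Finite := by
  refine ((f.coeff.support.powerset.image fun t => ∑ s ∈ t, f.coeff s).finite_toSet).subset ?_
  rintro _ ⟨m, rfl⟩
  simp only [filterChar_apply, coe_image, coe_powerset]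
  exact ⟨_, filter_subset _ _, rfl⟩

open scoped Classical in
lemma exists_mem_span_filterChar_eq (hS : ∀ s : S, s * s = s) (s : Finset (MonoidAlgebra K S)) :
    ∃ u ∈ TwoSidedIdeal.span (s : Set (MonoidAlgebra K S)), ∀ m,
      filterChar hS m u = if ∀ f ∈ s, filterChar hS m f = 0 then 0 else 1 := by
  have hT : (⋃ f ∈ s, Set.range fun m => filterChar hS m f).Finite :=
    s.finite_toSet.biUnion fun f _ => finite_range_filterChar hS f
  obtain ⟨u, hu, hχu⟩ :=
    TwoSidedIdeal.exists_mem_forall_map_eq_one_sub_prod (H := MonoidAlgebra K S →ₙₐ[K] K)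
    (TwoSidedIdeal.span (s : Set (MonoidAlgebra K S)))
    -- `t⁻¹ • f` itself need not lie in an ideal of a non-unital algebra
    ((s ×ˢ hT.toFinset).image fun p => (p.2⁻¹ ^ 2 • p.1) * p.1) (by
      simp only [mem_image, mem_product, forall_exists_index, and_imp]
      rintro _ ⟨f, t⟩ hf _ rfl
      exact TwoSidedIdeal.mul_mem_left _ _ _ (TwoSidedIdeal.subset_span hf))
  refine ⟨u, hu, fun m => ?_⟩
  rw [hχu (filterChar hS m)]
  split_ifs with h
  · rw [prod_eq_one, sub_self]
    simp only [mem_image, mem_product, Prod.exists]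
    rintro _ ⟨f, t, ⟨hf, -⟩, rfl⟩
    rw [map_mul, h f hf, mul_zero, sub_zero]
  · obtain ⟨f, hf, hχf⟩ := not_forall₂.mp h
    rw [prod_eq_zero (i := ((filterChar hS m f)⁻¹ ^ 2 • f) * f), sub_zero]
    · exact mem_image.mpr ⟨(f, _), mem_product.mpr ⟨hf, hT.mem_toFinset.mpr
        (Set.mem_biUnion hf ⟨m, rfl⟩)⟩, rfl⟩
    · rw [map_mul, map_smul, smul_eq_mul, sub_eq_zero]
      field_simp

lemma exists_isIdempotentElem_mem_span (hS : ∀ s : S, s * s = s)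
    (s : Finset (MonoidAlgebra K S)) :
    ∃ u ∈ TwoSidedIdeal.span (s : Set (MonoidAlgebra K S)),
      IsIdempotentElem u ∧ ∀ f ∈ s, u * f = f := by
  classical
  obtain ⟨u, hu, hχu⟩ := exists_mem_span_filterChar_eq hS s
  refine ⟨u, hu, eq_of_forall_filterChar_eq hS fun m => ?_, fun f hf =>
    eq_of_forall_filterChar_eq hS fun m => ?_⟩
  · rw [map_mul, hχu]
    split_ifs <;> simp
  · rw [map_mul, hχu]
    split_ifs with h
    · rw [h f hf, mul_zero]
    · rw [one_mul]

end MonoidAlgebra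

/-- Let `S` be a commutative semigroup in which every element is idempotent, `K` a
field, and `KS` the semigroup algebra.  Then every finitely generated two-sided ideal
`I` of `KS` is principal, generated by an idempotent `u ∈ I` which acts as a two-sided
multiplicative identity on `I`. -/
theorem semigroupAlgebra_fg_ideal_principal_idempotent {K S : Type*} [Field K]
    [CommSemigroup S] (hS : ∀ s : S, s * s = s)
    (I : TwoSidedIdeal (MonoidAlgebra K S))
    (hI : ∃ s : Finset (MonoidAlgebra K S), I = TwoSidedIdeal.span (s : Set (MonoidAlgebra K S))) :
    ∃ u : MonoidAlgebra K S, u ∈ I ∧ u * u = u ∧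
      I = TwoSidedIdeal.span {u} ∧ ∀ y ∈ I, u * y = y ∧ y * u = y := by
  obtain ⟨s, rfl⟩ := hI
  obtain ⟨u, hu, huu, hus⟩ := MonoidAlgebra.exists_isIdempotentElem_mem_span hS s
  refine ⟨u, hu, huu, TwoSidedIdeal.span_eq_span_singleton_of_mul_eq hu hus, fun y hy => ?_⟩
  have huy : u * y = y := TwoSidedIdeal.mul_eq_self_of_mem_span hus hy
  exact ⟨huy, mul_comm y u ▸ huy⟩
end

section
/- Let S be a commutative monoid in which every element is an idempotent (s·s = s for all s ∈ S), and let K be a field. Then every module over the monoid algebra K[S] is flat. -/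
/-! The algebra `K[S]` is generated by the idempotents `s`, hence integral over `K` and so of
Krull dimension zero. It is reduced, because the characters `χₘ(u) = [m * u = m]` separate
points: for `m` maximal in the support of `a` for the order `m ≤ t ↔ m * t = m`, `χₘ(a)` is
the coefficient of `m` in `a`. A reduced ring of dimension zero has fields as its local rings,
so every module over it is locally flat, hence flat. -/

open Polynomial in
theorem IsIdempotentElem.isIntegral {R A : Type*} [CommRing R] [Ring A] [Algebra R A] {e : A}
    (he : IsIdempotentElem e) : IsIntegral R e :=
  ⟨X * (X - C 1), monic_X.mul (monic_X_sub_C 1), by simp [mul_sub, he.eq]⟩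

theorem Ring.KrullDimLE.of_isIntegral (R A : Type*) [CommRing R] [CommRing A] [Algebra R A]
    [Algebra.IsIntegral R A] [Ring.KrullDimLE 0 R] : Ring.KrullDimLE 0 A :=
  .mk₀ fun I _ ↦ Ideal.isMaximal_of_isIntegral_of_isMaximal_comap (R := R) I inferInstance

theorem Module.Flat.of_isReduced_of_krullDimLE_zero {R : Type*} [CommRing R] [IsReduced R]
    [Ring.KrullDimLE 0 R] (M : Type*) [AddCommGroup M] [Module R M] : Module.Flat R M := by
  refine Module.flat_of_localized_maximal _ fun P _ ↦ ?_
  have := Ring.KrullDimLE.of_isLocalization P (Ideal.mem_minimalPrimes_of_krullDimLE_zero P)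
    (Localization.AtPrime P)
  let := (Ring.KrullDimLE.isField_of_isReduced (R := Localization.AtPrime P)).toField
  exact Module.Flat.trans R (Localization.AtPrime P) _

section IdempotentMonoid

variable {S : Type*} [CommMonoid S]

theorem mul_mul_eq_self_iff (hS : ∀ s : S, s * s = s) {s u v : S} :
    s * (u * v) = s ↔ s * u = s ∧ s * v = s := by
  refine ⟨fun h ↦ ⟨?_, ?_⟩, fun ⟨hu, hv⟩ ↦ by rw [← mul_assoc, hu, hv]⟩
  · calc s * u = s * (u * v) * u := by rw [h]
      _ = s * (u * u * v) := by ac_rfl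
      _ = s := by rw [hS, h]
  · calc s * v = s * (u * v) * v := by rw [h]
      _ = s * (u * (v * v)) := by ac_rfl
      _ = s := by rw [hS, h]

theorem Finset.exists_mul_eq_self_imp_eq (hS : ∀ s : S, s * s = s) {s : Finset S}
    (hs : s.Nonempty) : ∃ m ∈ s, ∀ t ∈ s, m * t = m → t = m := by
  obtain ⟨m, hm, hmin⟩ := s.exists_minimalFor (fun t ↦ {u : S | t * u = t}) hs
  refine ⟨m, hm, fun t ht hmt ↦ ?_⟩
  have htm : {u : S | t * u = t} ⊆ {u | m * u = m} := fun u (hu : t * u = t) ↦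
    show m * u = m by rw [← hmt, mul_assoc, hu]
  have hmt' : t * m = t := hmin ht htm (hS m)
  rw [← hmt', mul_comm, hmt]

end IdempotentMonoid

namespace MonoidAlgebra

variable {K S : Type*} [CommMonoid S]

open scoped Classical in
noncomputable def idempotentChar [CommSemiring K] (hS : ∀ s : S, s * s = s) (s : S) :
    S →* K where
  toFun u := if s * u = s then 1 else 0
  map_one' := by simp
  map_mul' u v := by
    by_cases hu : s * u = s <;> by_cases hv : s * v = s <;> simp [mul_mul_eq_self_iff hS, hu, hv]

theorem eq_zero_of_forall_lift_idempotentChar_eq_zero [CommSemiring K]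
    (hS : ∀ s : S, s * s = s) {a : K[S]} (h : ∀ s, lift K K S (idempotentChar hS s) a = 0) :
    a = 0 := by
  by_contra ha
  obtain ⟨m, hm, hmax⟩ := a.coeff.support.exists_mul_eq_self_imp_eq hS
    (Finsupp.support_nonempty_iff.mpr (by simpa using ha))
  have hcoeff : lift K K S (idempotentChar hS m) a = a.coeff m := by
    rw [lift_apply, Finsupp.sum, Finset.sum_eq_single m]
    · simp [idempotentChar, hS m]
    · intro t ht htm
      have hmt : m * t ≠ m := fun hmt ↦ htm (hmax t ht hmt)
      simp [idempotentChar, hmt]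
    · intro hm'
      simp [Finsupp.notMem_support_iff.mp hm']
  exact Finsupp.mem_support_iff.mp hm (hcoeff ▸ h m)

theorem isReduced_of_idempotent [CommSemiring K] [IsReduced K] (hS : ∀ s : S, s * s = s) :
    IsReduced K[S] :=
  ⟨fun a ⟨n, hn⟩ ↦ eq_zero_of_forall_lift_idempotentChar_eq_zero hS fun s ↦
    IsReduced.eq_zero _ ⟨n, by rw [← map_pow, hn, map_zero]⟩⟩

theorem isIntegral_of_idempotent [CommRing K] (hS : ∀ s : S, s * s = s) :
    Algebra.IsIntegral K K[S] :=
  ⟨fun a ↦ a.induction_on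
    (fun s ↦ IsIdempotentElem.isIntegral (by rw [IsIdempotentElem, ← map_mul, hS]))
    (fun _ _ ↦ .add) (fun r _ ↦ .smul r)⟩

end MonoidAlgebra

/-- Let `S` be a commutative monoid in which every element is idempotent and `K` a
field.  Then every module over the monoid algebra `K[S]` is flat. -/
theorem monoidAlgebra_module_flat {K S : Type*} [Field K] [CommMonoid S]
    (hS : ∀ s : S, s * s = s)
    (M : Type*) [AddCommGroup M] [Module (MonoidAlgebra K S) M] :
    Module.Flat (MonoidAlgebra K S) M :=
  have := MonoidAlgebra.isReduced_of_idempotent (K := K) hS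
  have := MonoidAlgebra.isIntegral_of_idempotent (K := K) hS
  have := Ring.KrullDimLE.of_isIntegral K (MonoidAlgebra K S)
  Module.Flat.of_isReduced_of_krullDimLE_zero M
end
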